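/- For every singular λ ∈ J^* there exists a unique idempotent e ∈ S such that the G̃-orbit of λ has nonempty intersection with J_e^* and every element of this intersection is regular in J_e^*, i.e. for every μ in the intersection there is no idempotent f ∈ eAe with f ≠ e such that μ(x) = μ(fxf) for all x ∈ J. -/
import Mathlib


/-- `λ ∈ J_e^*`: the linear form `λ` on `J` satisfies `λ x = λ (e*x*e)` for all `x ∈ J`. -/
def MemJeStar {F A : Type*} [Field F] [Ring A] [Algebra F A]
    (J : Ideal A) (hJr : ∀ x ∈ J, ∀ a : A, x * a ∈ J) (e : A)
    (lam : (Submodule.restrictScalars F J) →ₗ[F] F) : Prop :=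
  ∀ x (hx : x ∈ J), lam ⟨x, hx⟩ = lam ⟨e * x * e, hJr _ (J.mul_mem_left e hx) e⟩

/-- `λ ∈ J^*` is *singular* if `λ ∈ J_e^*` for some idempotent `e ≠ 1` of `A`. -/
def IsSingularStar {F A : Type*} [Field F] [Ring A] [Algebra F A]
    (J : Ideal A) (hJr : ∀ x ∈ J, ∀ a : A, x * a ∈ J)
    (lam : (Submodule.restrictScalars F J) →ₗ[F] F) : Prop :=
  ∃ e : A, IsIdempotentElem e ∧ e ≠ 1 ∧ MemJeStar J hJr e lam

/-- `μ ∈ J_e^*` is *regular in `J_e^*`* if there is no idempotent `f` of the corner algebra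
`eAe` with `f ≠ e` such that `μ x = μ (f*x*f)` for all `x ∈ J`. -/
def IsRegularStarInJe {F A : Type*} [Field F] [Ring A] [Algebra F A]
    (J : Ideal A) (hJr : ∀ x ∈ J, ∀ a : A, x * a ∈ J) (e : A)
    (mu : (Submodule.restrictScalars F J) →ₗ[F] F) : Prop :=
  ¬ ∃ f : A, IsIdempotentElem f ∧ e * f * e = f ∧ f ≠ e ∧
      ∀ x (hx : x ∈ J), mu ⟨x, hx⟩ = mu ⟨f * x * f, hJr _ (J.mul_mem_left f hx) f⟩

/-- `λ, μ ∈ J^*` lie in the same `G̃`-orbit: `μ x = λ (t * a * x * b * t⁻¹)` for all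
`x ∈ J`, where `t ∈ H = S^×` (both `t` and `t⁻¹` lie in `S`) and `a, b ∈ N = 1 + J`. -/
def SameOrbitJStar {F A : Type*} [Field F] [Ring A] [Algebra F A]
    (J : Ideal A) (hJr : ∀ x ∈ J, ∀ a : A, x * a ∈ J) (S : Subalgebra F A)
    (lam mu : (Submodule.restrictScalars F J) →ₗ[F] F) : Prop :=
  ∃ t : Aˣ, (t : A) ∈ S ∧ ((t⁻¹ : Aˣ) : A) ∈ S ∧
    ∃ a b : A, a - 1 ∈ J ∧ b - 1 ∈ J ∧
      ∀ x (hx : x ∈ J), mu ⟨x, hx⟩ =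
        lam ⟨(t : A) * a * x * b * ((t⁻¹ : Aˣ) : A),
          hJr _ (hJr _ (J.mul_mem_left ((t : A) * a) hx) b) ((t⁻¹ : Aˣ) : A)⟩


section Aux

variable {F A : Type*} [Field F] [Ring A] [Algebra F A]

theorem lam_congr (J : Ideal A)
    (lam : (Submodule.restrictScalars F J) →ₗ[F] F) {x y : A}
    (hx : x ∈ J) (hy : y ∈ J) (h : x = y) :
    lam ⟨x, hx⟩ = lam ⟨y, hy⟩ := by subst h; rfl

/-- Two-sided multiplication as a linear endomorphism of `J`. -/
def mulLR (J : Ideal A) (hJr : ∀ x ∈ J, ∀ a : A, x * a ∈ J) (g h : A) :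
    (Submodule.restrictScalars F J) →ₗ[F] (Submodule.restrictScalars F J) where
  toFun x := ⟨g * x.1 * h, hJr _ (J.mul_mem_left g x.2) h⟩
  map_add' x y := Subtype.ext (by simp [mul_add, add_mul])
  map_smul' c x := Subtype.ext (by simp [mul_smul_comm, smul_mul_assoc])

/-- In a finite ring, a left inverse makes an element a unit. -/
theorem isUnit_of_left_inv [Finite A] {z a : A} (h : z * a = 1) : IsUnit a := by
  have hinj : Function.Injective fun x : A => a * x := by
    intro x y hxy
    have h2 : z * (a * x) = z * (a * y) := congrArg (fun w => z * w) hxy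
    simpa [← mul_assoc, h] using h2
  obtain ⟨c, hc⟩ := Finite.surjective_of_injective hinj 1
  simp only at hc
  have hz : z = c := by
    calc z = z * (a * c) := by rw [hc]; simp
    _ = (z * a) * c := by rw [mul_assoc]
    _ = c := by rw [h, one_mul]
  exact ⟨⟨a, z, by rw [hz]; exact hc, h⟩, rfl⟩

/-- Elements congruent to 1 mod the Jacobson radical are units (finite ring case). -/
theorem isUnit_of_sub_one_mem [Finite A] (J : Ideal A) (hJ : J = (⊥ : Ideal A).jacobson)
    {a : A} (ha : a - 1 ∈ J) : IsUnit a := by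
  rw [hJ] at ha
  obtain ⟨z, hz⟩ := Ideal.mem_jacobson_iff.mp ha 1
  rw [Ideal.mem_bot, mul_one, sub_eq_zero] at hz
  have : z * a = 1 := by
    have := hz
    rw [mul_sub, mul_one] at this
    linear_combination (norm := noncomm_ring) this
  exact isUnit_of_left_inv this

theorem inv_sub_one_mem (J : Ideal A) (hJr : ∀ x ∈ J, ∀ a : A, x * a ∈ J)
    (u : Aˣ) (hu : (u : A) - 1 ∈ J) : ((u⁻¹ : Aˣ) : A) - 1 ∈ J := by
  have : (1 : A) - (u⁻¹ : Aˣ) = ((u : A) - 1) * ((u⁻¹ : Aˣ) : A) := by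
    rw [sub_mul, one_mul, Units.mul_inv]
  have h2 : (1 : A) - ((u⁻¹ : Aˣ) : A) ∈ J := this ▸ hJr _ hu _
  simpa using J.neg_mem h2

/-- An idempotent in `J` is zero (finite ring). -/
theorem idem_in_J_eq_zero [Finite A] (J : Ideal A) (hJ : J = (⊥ : Ideal A).jacobson)
    {g : A} (hg : IsIdempotentElem g) (hgJ : g ∈ J) : g = 0 := by
  have h1 : (1 : A) - g - 1 ∈ J := by simpa using J.neg_mem hgJ
  obtain ⟨u, hu⟩ := isUnit_of_sub_one_mem J hJ h1
  have : (1 - g) * g = 0 := by rw [sub_mul, one_mul, hg.eq, sub_self]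
  rw [← hu] at this
  calc g = ((u⁻¹ : Aˣ) : A) * ((u : A) * g) := by rw [Units.inv_mul_cancel_left]
  _ = 0 := by rw [this, mul_zero]

/-- Conjugating one idempotent to another congruent one mod J. -/
theorem conj_idem [Finite A] (J : Ideal A) (hJ : J = (⊥ : Ideal A).jacobson)
    (hJr : ∀ x ∈ J, ∀ a : A, x * a ∈ J)
    {e f : A} (he : IsIdempotentElem e) (hf : IsIdempotentElem f) (hfe : f - e ∈ J) :
    ∃ u : Aˣ, (u : A) - 1 ∈ J ∧ ((u⁻¹ : Aˣ) : A) - 1 ∈ J ∧ (u : A) * e = f * (u : A) := by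
  set w : A := f * e + (1 - f) * (1 - e) with hw
  have hw1 : w - 1 ∈ J := by
    have : w - 1 = (f - e) * e + f * (e - f) := by
      simp only [hw]
      noncomm_ring
      rw [he.eq, hf.eq]; abel
    rw [this]
    exact J.add_mem (hJr _ hfe e) (J.mul_mem_left f (by simpa using J.neg_mem hfe))
  obtain ⟨u, hu⟩ := isUnit_of_sub_one_mem J hJ hw1
  refine ⟨u, hu ▸ hw1, inv_sub_one_mem J hJr u (hu ▸ hw1), ?_⟩
  rw [hu]
  have hz : (1 - e) * e = 0 := by rw [sub_mul, one_mul, he.eq, sub_self]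
  have hz2 : f * (1 - f) = 0 := by rw [mul_sub, mul_one, hf.eq, sub_self]
  have h1 : w * e = f * e := by
    rw [hw, add_mul, mul_assoc, mul_assoc, hz, mul_zero, add_zero, he.eq]
  have h2 : f * w = f * e := by
    rw [hw, mul_add, ← mul_assoc, ← mul_assoc, hz2, zero_mul, add_zero, hf.eq]
  rw [h1, h2]

/-- In a finite monoid some positive power of every element is idempotent. -/
theorem exists_pow_idem [Finite A] (a : A) : ∃ n, 0 < n ∧ IsIdempotentElem (a ^ n) := by
  obtain ⟨m, n, hmn, h⟩ := Finite.exists_ne_map_eq_of_infinite fun k : ℕ => a ^ (k + 1)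
  wlog hlt : m < n generalizing m n
  · exact this n m hmn.symm h.symm (by omega)
  set b := m + 1 with hb
  set d := n - m with hd
  have hd0 : 0 < d := by omega
  have hbase : a ^ (b + d) = a ^ b := by
    have : n + 1 = b + d := by omega
    rw [← this]; exact h.symm
  have key : ∀ c k, a ^ (b + c + k * d) = a ^ (b + c) := by
    intro c k
    induction k with
    | zero => simp
    | succ k ih =>
      have : b + c + (k + 1) * d = (c + k * d) + (b + d) := by ring
      rw [this, pow_add, hbase, ← pow_add]
      have : c + k * d + b = b + c + k * d := by ring
      rw [this, ih]
  refine ⟨b * d, by positivity, ?_⟩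
  unfold IsIdempotentElem
  rw [← pow_add]
  have h1 : b * d + b * d = b + b * (d - 1) + b * d := by
    have : d - 1 + 1 = d := by omega
    nlinarith [this]
  have h2 : b * d = b + b * (d - 1) := by omega
  rw [h1, key, ← h2]

theorem diff_pow_mem (J : Ideal A) (hJr : ∀ x ∈ J, ∀ a : A, x * a ∈ J)
    {x y : A} (h : x - y ∈ J) : ∀ n : ℕ, x ^ n - y ^ n ∈ J := by
  intro n
  induction n with
  | zero => simpa using J.zero_mem
  | succ n ih =>
    have : x ^ (n + 1) - y ^ (n + 1) = x * (x ^ n - y ^ n) + (x - y) * y ^ n := by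
      noncomm_ring
      simp [← pow_succ, ← pow_succ']
    rw [this]
    exact J.add_mem (J.mul_mem_left x ih) (hJr _ h _)

end Aux

section Orbit

variable {F A : Type*} [Field F] [Ring A] [Algebra F A]
variable (J : Ideal A) (hJr : ∀ x ∈ J, ∀ a : A, x * a ∈ J) (S : Subalgebra F A)

theorem orbit_refl (lam : (Submodule.restrictScalars F J) →ₗ[F] F) :
    SameOrbitJStar J hJr S lam lam := by
  refine ⟨1, by simpa using S.one_mem, by simpa using S.one_mem, 1, 1,
    by simpa using J.zero_mem, by simpa using J.zero_mem,
    fun x hx => lam_congr J lam _ _ ?_⟩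
  simp

theorem orbit_symm [Finite A] (hJ : J = (⊥ : Ideal A).jacobson)
    {lam mu : (Submodule.restrictScalars F J) →ₗ[F] F}
    (h : SameOrbitJStar J hJr S lam mu) : SameOrbitJStar J hJr S mu lam := by
  obtain ⟨t, htS, htS', a, b, ha, hb, hrel⟩ := h
  obtain ⟨ua, hua⟩ := isUnit_of_sub_one_mem J hJ ha
  obtain ⟨ub, hub⟩ := isUnit_of_sub_one_mem J hJ hb
  subst hua hub
  have hainv : ((ua⁻¹ : Aˣ) : A) - 1 ∈ J := inv_sub_one_mem J hJr ua ha
  have hbinv : ((ub⁻¹ : Aˣ) : A) - 1 ∈ J := inv_sub_one_mem J hJr ub hb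
  refine ⟨t⁻¹, htS', by simpa using htS,
    (t : A) * ((ua⁻¹ : Aˣ) : A) * ((t⁻¹ : Aˣ) : A),
    (t : A) * ((ub⁻¹ : Aˣ) : A) * ((t⁻¹ : Aˣ) : A), ?_, ?_, ?_⟩
  · have hident : (t : A) * ((ua⁻¹ : Aˣ) : A) * ((t⁻¹ : Aˣ) : A) - 1
        = (t : A) * (((ua⁻¹ : Aˣ) : A) - 1) * ((t⁻¹ : Aˣ) : A) := by
      simp [mul_sub, sub_mul, Units.mul_inv]
    rw [hident]
    exact hJr _ (J.mul_mem_left _ hainv) _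
  · have hident : (t : A) * ((ub⁻¹ : Aˣ) : A) * ((t⁻¹ : Aˣ) : A) - 1
        = (t : A) * (((ub⁻¹ : Aˣ) : A) - 1) * ((t⁻¹ : Aˣ) : A) := by
      simp [mul_sub, sub_mul, Units.mul_inv]
    rw [hident]
    exact hJr _ (J.mul_mem_left _ hbinv) _
  · intro y hy
    have hxJ : ((ua⁻¹ : Aˣ) : A) * ((t⁻¹ : Aˣ) : A) * y * (t : A) * ((ub⁻¹ : Aˣ) : A) ∈ J :=
      hJr _ (hJr _ (J.mul_mem_left _ hy) _) _
    have h1 := hrel _ hxJ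
    have h2 : (t : A) * (ua : A) * (((ua⁻¹ : Aˣ) : A) * ((t⁻¹ : Aˣ) : A) * y * (t : A) * ((ub⁻¹ : Aˣ) : A)) * (ub : A) * ((t⁻¹ : Aˣ) : A) = y := by
      simp [mul_assoc, Units.mul_inv_cancel_left, Units.inv_mul_cancel_left,
        Units.mul_inv, Units.inv_mul]
    calc lam ⟨y, hy⟩ = lam ⟨(t : A) * (ua : A) * (((ua⁻¹ : Aˣ) : A) * ((t⁻¹ : Aˣ) : A) * y * (t : A) * ((ub⁻¹ : Aˣ) : A)) * (ub : A) * ((t⁻¹ : Aˣ) : A), by rw [h2]; exact hy⟩ := lam_congr J lam _ _ h2.symm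
    _ = mu ⟨((ua⁻¹ : Aˣ) : A) * ((t⁻¹ : Aˣ) : A) * y * (t : A) * ((ub⁻¹ : Aˣ) : A), hxJ⟩ := (h1).symm
    _ = mu ⟨((t⁻¹ : Aˣ) : A) * ((t : A) * ((ua⁻¹ : Aˣ) : A) * ((t⁻¹ : Aˣ) : A)) * y * ((t : A) * ((ub⁻¹ : Aˣ) : A) * ((t⁻¹ : Aˣ) : A)) * ((t⁻¹⁻¹ : Aˣ) : A), _⟩ := by
      apply lam_congr J mu
      simp [mul_assoc, Units.mul_inv_cancel_left, Units.inv_mul_cancel_left]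

theorem orbit_trans {lam mu nu : (Submodule.restrictScalars F J) →ₗ[F] F}
    (h1 : SameOrbitJStar J hJr S lam mu) (h2 : SameOrbitJStar J hJr S mu nu) :
    SameOrbitJStar J hJr S lam nu := by
  obtain ⟨t, htS, htS', a, b, ha, hb, hrel⟩ := h1
  obtain ⟨t', ht'S, ht'S', a', b', ha', hb', hrel'⟩ := h2
  refine ⟨t * t', by rw [Units.val_mul]; exact S.mul_mem htS ht'S,
    by rw [mul_inv_rev, Units.val_mul]; exact S.mul_mem ht'S' htS',
    ((t'⁻¹ : Aˣ) : A) * a * (t' : A) * a', b' * ((t'⁻¹ : Aˣ) : A) * b * (t' : A),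
    ?_, ?_, ?_⟩
  · have hident : ((t'⁻¹ : Aˣ) : A) * a * (t' : A) * a' - 1
        = ((t'⁻¹ : Aˣ) : A) * a * (t' : A) * (a' - 1) + ((t'⁻¹ : Aˣ) : A) * ((a - 1) * (t' : A)) := by
      simp [mul_sub, sub_mul, mul_assoc, Units.inv_mul_cancel_left]
    rw [hident]
    exact J.add_mem (J.mul_mem_left _ ha') (J.mul_mem_left _ (hJr _ ha _))
  · have hident : b' * ((t'⁻¹ : Aˣ) : A) * b * (t' : A) - 1
        = b' * (((t'⁻¹ : Aˣ) : A) * ((b - 1) * (t' : A))) + (b' - 1) := by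
      simp [mul_sub, sub_mul, mul_assoc, Units.inv_mul_cancel_left]
    rw [hident]
    exact J.add_mem (J.mul_mem_left _ (J.mul_mem_left _ (hJr _ hb _))) hb'
  · intro x hx
    have hyJ : (t' : A) * a' * x * b' * ((t'⁻¹ : Aˣ) : A) ∈ J :=
      hJr _ (hJr _ (J.mul_mem_left _ hx) _) _
    calc nu ⟨x, hx⟩ = mu ⟨(t' : A) * a' * x * b' * ((t'⁻¹ : Aˣ) : A), hyJ⟩ := hrel' x hx
    _ = lam ⟨(t : A) * a * ((t' : A) * a' * x * b' * ((t'⁻¹ : Aˣ) : A)) * b * ((t⁻¹ : Aˣ) : A), _⟩ := hrel _ hyJ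
    _ = lam ⟨(((t * t') : Aˣ) : A) * (((t'⁻¹ : Aˣ) : A) * a * (t' : A) * a') * x * (b' * ((t'⁻¹ : Aˣ) : A) * b * (t' : A)) * ((((t * t')⁻¹ : Aˣ)) : A), _⟩ := by
      apply lam_congr J lam
      simp [Units.val_mul, mul_inv_rev, mul_assoc, Units.mul_inv_cancel_left,
        Units.inv_mul_cancel_left]

end Orbit

section Straighten

variable {F A : Type*} [Field F] [Ring A] [Algebra F A] [Finite A]
variable (J : Ideal A)
  (hJr : ∀ x ∈ J, ∀ a : A, x * a ∈ J) (S : Subalgebra F A)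

theorem straighten (hJ : J = (⊥ : Ideal A).jacobson) {g h k : A} (hg : IsIdempotentElem g) (hh : IsIdempotentElem h)
    (hk : IsIdempotentElem k) (hhg : h - g ∈ J) (hkg : k - g ∈ J)
    (mu : (Submodule.restrictScalars F J) →ₗ[F] F)
    (hm : ∀ x (hx : x ∈ J), mu ⟨x, hx⟩ = mu ⟨h * x * k, hJr _ (J.mul_mem_left h hx) k⟩) :
    ∃ nu, SameOrbitJStar J hJr S mu nu ∧ MemJeStar J hJr g nu := by
  obtain ⟨u, hu1, hu2, hue⟩ := conj_idem J hJ hJr hg hh hhg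
  obtain ⟨v, hv1, hv2, hve⟩ := conj_idem J hJ hJr hg hk hkg
  set nu := mu.comp (mulLR J hJr (u : A) ((v⁻¹ : Aˣ) : A)) with hnudef
  have hform : ∀ x (hx : x ∈ J), nu ⟨x, hx⟩
      = mu ⟨(u : A) * x * ((v⁻¹ : Aˣ) : A), hJr _ (J.mul_mem_left _ hx) _⟩ :=
    fun x hx => rfl
  have hgv : g * ((v⁻¹ : Aˣ) : A) = ((v⁻¹ : Aˣ) : A) * k := by
    have h1 : (v : A) * (g * ((v⁻¹ : Aˣ) : A)) = k := by
      rw [← mul_assoc, hve, mul_assoc, Units.mul_inv, mul_one]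
    calc g * ((v⁻¹ : Aˣ) : A)
        = ((v⁻¹ : Aˣ) : A) * ((v : A) * (g * ((v⁻¹ : Aˣ) : A))) :=
          (Units.inv_mul_cancel_left _ _).symm
    _ = ((v⁻¹ : Aˣ) : A) * k := by rw [h1]
  have key : ∀ x : A, h * ((u : A) * x * ((v⁻¹ : Aˣ) : A)) * k
      = (u : A) * (g * x * g) * ((v⁻¹ : Aˣ) : A) := by
    intro x
    simp only [mul_assoc]
    rw [← hgv, ← mul_assoc h, ← hue, mul_assoc]
  refine ⟨nu, ⟨1, by simpa using S.one_mem, by simpa using S.one_mem,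
    (u : A), ((v⁻¹ : Aˣ) : A), hu1, hv2, fun x hx => ?_⟩, fun x hx => ?_⟩
  · exact (hform x hx).trans (lam_congr J mu _ _ (by simp))
  · calc nu ⟨x, hx⟩ = mu ⟨(u : A) * x * ((v⁻¹ : Aˣ) : A), _⟩ := hform x hx
    _ = mu ⟨h * ((u : A) * x * ((v⁻¹ : Aˣ) : A)) * k, _⟩ := hm _ _
    _ = mu ⟨(u : A) * (g * x * g) * ((v⁻¹ : Aˣ) : A), _⟩ := lam_congr J mu _ _ (key x)
    _ = nu ⟨g * x * g, _⟩ := (hform _ _).symm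

theorem memJe_to_S (hJ : J = (⊥ : Ideal A).jacobson) (hS : IsCompl (Subalgebra.toSubmodule S) (Submodule.restrictScalars F J))
    {f : A} (hf : IsIdempotentElem f)
    {lam mu : (Submodule.restrictScalars F J) →ₗ[F] F}
    (horb : SameOrbitJStar J hJr S lam mu)
    (hm : ∀ x (hx : x ∈ J), mu ⟨x, hx⟩ = mu ⟨f * x * f, hJr _ (J.mul_mem_left f hx) f⟩) :
    ∃ s, s ∈ S ∧ IsIdempotentElem s ∧ f - s ∈ J ∧
      ∃ nu, SameOrbitJStar J hJr S lam nu ∧ MemJeStar J hJr s nu := by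
  have hdis : ∀ x, x ∈ S → x ∈ J → x = 0 := fun x h1 h2 =>
    Submodule.disjoint_def.mp hS.disjoint x ((Subalgebra.mem_toSubmodule S).mpr h1) h2
  obtain ⟨s, hsS, hfs⟩ : ∃ s ∈ S, f - s ∈ J := by
    have hf' : f ∈ (Subalgebra.toSubmodule S) ⊔ (Submodule.restrictScalars F J) := by
      rw [codisjoint_iff.mp hS.codisjoint]; trivial
    obtain ⟨y, hy, z, hz, hyz⟩ := Submodule.mem_sup.mp hf'
    exact ⟨y, (Subalgebra.mem_toSubmodule S).mp hy, by rw [← hyz]; simpa using hz⟩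
  have hsidem : IsIdempotentElem s := by
    have h1 : s * s - s = (s * (s - f) + (s - f) * f) + (f - s) := by
      rw [mul_sub, sub_mul, hf.eq]; abel
    have hsf : s - f ∈ J := by simpa using J.neg_mem hfs
    have h1m : s * s - s ∈ J := by
      rw [h1]
      exact J.add_mem (J.add_mem (J.mul_mem_left s hsf) (hJr _ hsf f)) hfs
    have h2 : s * s - s ∈ S := S.sub_mem (S.mul_mem hsS hsS) hsS
    exact sub_eq_zero.mp (hdis _ h2 h1m)
  obtain ⟨nu, hnu1, hnu2⟩ := straighten J hJr S hJ hsidem hf hf hfs hfs mu hm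
  exact ⟨s, hsS, hsidem, hfs, nu, orbit_trans J hJr S horb hnu1, hnu2⟩

end Straighten

section Closure

variable {F A : Type*} [Field F] [Ring A] [Algebra F A] [Finite A]
variable (J : Ideal A)
  (hJr : ∀ x ∈ J, ∀ a : A, x * a ∈ J) (S : Subalgebra F A)

theorem closure_mul (hJ : J = (⊥ : Ideal A).jacobson)
    (hcomm : ∀ a ∈ S, ∀ b ∈ S, a * b = b * a)
    {lam mu mu' : (Submodule.restrictScalars F J) →ₗ[F] F} {s s' : A}
    (hsS : s ∈ S) (hs'S : s' ∈ S)
    (hsi : IsIdempotentElem s) (hs'i : IsIdempotentElem s')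
    (h1 : SameOrbitJStar J hJr S lam mu) (h2 : SameOrbitJStar J hJr S lam mu')
    (hm : MemJeStar J hJr s mu) (hm' : MemJeStar J hJr s' mu') :
    ∃ nu, SameOrbitJStar J hJr S lam nu ∧ MemJeStar J hJr (s * s') nu := by
  obtain ⟨t, htS, htS', a, b, ha, hb, hrelf⟩ :=
    orbit_trans J hJr S (orbit_symm J hJr S hJ h1) h2
  obtain ⟨ua, hua⟩ := isUnit_of_sub_one_mem J hJ ha
  obtain ⟨ub, hub⟩ := isUnit_of_sub_one_mem J hJ hb
  subst hua hub
  set p : A := ((ua⁻¹ : Aˣ) : A) * s * (ua : A) with hpdef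
  set q : A := (ub : A) * s * ((ub⁻¹ : Aˣ) : A) with hqdef
  have hts : (t : A) * s = s * (t : A) := hcomm _ htS _ hsS
  have hst' : s * ((t⁻¹ : Aˣ) : A) = ((t⁻¹ : Aˣ) : A) * s := hcomm _ hsS _ htS'
  -- invariance of mu' under (p, q)
  have hpq : ∀ x (hx : x ∈ J), mu' ⟨x, hx⟩
      = mu' ⟨p * x * q, hJr _ (J.mul_mem_left p hx) q⟩ := by
    intro x hx
    have hyJ : (t : A) * (ua : A) * x * (ub : A) * ((t⁻¹ : Aˣ) : A) ∈ J :=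
      hJr _ (hJr _ (J.mul_mem_left _ hx) _) _
    have hpxq : p * x * q ∈ J := hJr _ (J.mul_mem_left p hx) q
    have e1 := hrelf x hx
    have e2 := hrelf _ hpxq
    have e3 : (t : A) * (ua : A) * (p * x * q) * (ub : A) * ((t⁻¹ : Aˣ) : A)
        = s * ((t : A) * (ua : A) * x * (ub : A) * ((t⁻¹ : Aˣ) : A)) * s := by
      simp only [hpdef, hqdef, mul_assoc, Units.mul_inv_cancel_left,
        Units.inv_mul_cancel_left]
      rw [hst']
      rw [← mul_assoc, hts, mul_assoc]
    have e4 := hm _ hyJ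
    calc mu' ⟨x, hx⟩ = mu ⟨(t : A) * (ua : A) * x * (ub : A) * ((t⁻¹ : Aˣ) : A), hyJ⟩ := e1
    _ = mu ⟨s * ((t : A) * (ua : A) * x * (ub : A) * ((t⁻¹ : Aˣ) : A)) * s, _⟩ := e4
    _ = mu ⟨(t : A) * (ua : A) * (p * x * q) * (ub : A) * ((t⁻¹ : Aˣ) : A), _⟩ :=
      lam_congr J mu _ _ e3.symm
    _ = mu' ⟨p * x * q, hpxq⟩ := e2.symm
  -- p, q idempotent and congruent to s mod J
  have hpi : IsIdempotentElem p := by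
    show p * p = p
    simp only [hpdef, mul_assoc, Units.mul_inv_cancel_left, Units.inv_mul_cancel_left]
    rw [← mul_assoc s s, hsi.eq]
  have hqi : IsIdempotentElem q := by
    show q * q = q
    simp only [hqdef, mul_assoc, Units.mul_inv_cancel_left, Units.inv_mul_cancel_left]
    rw [← mul_assoc s s, hsi.eq]
  have hpsJ : p - s ∈ J := by
    have hd : s * ((ua : A) - 1) - ((ua : A) - 1) * s ∈ J :=
      J.sub_mem (J.mul_mem_left s ha) (hJr _ ha s)
    have hd' : s * (ua : A) - (ua : A) * s ∈ J := by
      have : s * ((ua : A) - 1) - ((ua : A) - 1) * s = s * (ua : A) - (ua : A) * s := by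
        rw [mul_sub, sub_mul, mul_one, one_mul]; abel
      rwa [this] at hd
    have : ((ua⁻¹ : Aˣ) : A) * (s * (ua : A) - (ua : A) * s) = p - s := by
      rw [mul_sub, hpdef, ← mul_assoc, ← mul_assoc, Units.inv_mul, one_mul]
    rw [← this]
    exact J.mul_mem_left _ hd'
  have hqsJ : q - s ∈ J := by
    have hd : ((ub : A) - 1) * s - s * ((ub : A) - 1) ∈ J :=
      J.sub_mem (hJr _ hb s) (J.mul_mem_left s hb)
    have hd' : (ub : A) * s - s * (ub : A) ∈ J := by
      have : ((ub : A) - 1) * s - s * ((ub : A) - 1) = (ub : A) * s - s * (ub : A) := by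
        rw [mul_sub, sub_mul, mul_one, one_mul]; abel
      rwa [this] at hd
    have : ((ub : A) * s - s * (ub : A)) * ((ub⁻¹ : Aˣ) : A) = q - s := by
      rw [sub_mul, hqdef, mul_assoc s, Units.mul_inv, mul_one]
    rw [← this]
    exact hJr _ hd' _
  -- combine with s'
  set h0 : A := s' * p with hh0def
  set k0 : A := q * s' with hk0def
  have hinv : ∀ x (hx : x ∈ J), mu' ⟨x, hx⟩
      = mu' ⟨h0 * x * k0, hJr _ (J.mul_mem_left h0 hx) k0⟩ := by
    intro x hx
    have hpxq : p * x * q ∈ J := hJr _ (J.mul_mem_left p hx) q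
    calc mu' ⟨x, hx⟩ = mu' ⟨p * x * q, hpxq⟩ := hpq x hx
    _ = mu' ⟨s' * (p * x * q) * s', _⟩ := hm' _ hpxq
    _ = mu' ⟨h0 * x * k0, _⟩ := lam_congr J mu' _ _ (by simp only [hh0def, hk0def, mul_assoc])
  have hiter : ∀ n x (hx : x ∈ J), mu' ⟨x, hx⟩
      = mu' ⟨h0 ^ n * x * k0 ^ n, hJr _ (J.mul_mem_left _ hx) _⟩ := by
    intro n
    induction n with
    | zero => exact fun x hx => lam_congr J mu' _ _ (by simp)
    | succ n ih =>
      intro x hx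
      have hyJ : h0 ^ n * x * k0 ^ n ∈ J := hJr _ (J.mul_mem_left _ hx) _
      calc mu' ⟨x, hx⟩ = mu' ⟨h0 ^ n * x * k0 ^ n, hyJ⟩ := ih x hx
      _ = mu' ⟨h0 * (h0 ^ n * x * k0 ^ n) * k0, _⟩ := hinv _ hyJ
      _ = mu' ⟨h0 ^ (n + 1) * x * k0 ^ (n + 1), _⟩ := by
        apply lam_congr J mu'
        rw [pow_succ' h0, pow_succ k0]
        simp only [mul_assoc]
  obtain ⟨n1, hn1pos, hn1⟩ := exists_pow_idem h0
  obtain ⟨n2, hn2pos, hn2⟩ := exists_pow_idem k0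
  set N : ℕ := n1 * n2 with hNdef
  have hNpos : 0 < N := Nat.mul_pos hn1pos hn2pos
  have hhN : IsIdempotentElem (h0 ^ N) := by
    rw [hNdef, pow_mul]; exact IsIdempotentElem.pow n2 hn1
  have hkN : IsIdempotentElem (k0 ^ N) := by
    rw [hNdef, mul_comm n1 n2, pow_mul]; exact IsIdempotentElem.pow n1 hn2
  have hcss : s' * s = s * s' := hcomm _ hs'S _ hsS
  have hss'i : IsIdempotentElem (s * s') :=
    IsIdempotentElem.mul_of_commute (hcss.symm) hsi hs'i
  have hh0ss' : h0 - s * s' ∈ J := by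
    have : h0 - s * s' = s' * (p - s) := by
      rw [mul_sub, hh0def, ← hcss]
    rw [this]; exact J.mul_mem_left _ hpsJ
  have hk0ss' : k0 - s * s' ∈ J := by
    have : k0 - s * s' = (q - s) * s' := by
      rw [sub_mul, hk0def]
    rw [this]; exact hJr _ hqsJ _
  have hpowprop : (s * s') ^ N = s * s' := by
    have hNe : N = (N - 1) + 1 := by omega
    rw [hNe]
    exact IsIdempotentElem.pow_succ_eq (N - 1) hss'i
  have hhNJ : h0 ^ N - s * s' ∈ J := by
    have := diff_pow_mem J hJr hh0ss' N
    rwa [hpowprop] at this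
  have hkNJ : k0 ^ N - s * s' ∈ J := by
    have := diff_pow_mem J hJr hk0ss' N
    rwa [hpowprop] at this
  obtain ⟨nu, hnu1, hnu2⟩ := straighten J hJr S hJ hss'i hhN hkN hhNJ hkNJ mu' (hiter N)
  exact ⟨nu, orbit_trans J hJr S h2 hnu1, hnu2⟩

end Closure

/-- Corollary 2.8: for every singular `λ ∈ J^*` there is a unique idempotent `e ∈ S` such
that the `G̃`-orbit of `λ` meets `J_e^*` and every element of that intersection is regular
in `J_e^*`. -/
theorem exists_unique_idempotent_regular_corner_dual
    {F A : Type*} [Field F] [Fintype F] [Ring A] [Algebra F A] [FiniteDimensional F A]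
    (J : Ideal A) (hJ : J = (⊥ : Ideal A).jacobson)
    (hJr : ∀ x ∈ J, ∀ a : A, x * a ∈ J)
    (hred : ∀ a b : A, a * b - b * a ∈ J)
    (S : Subalgebra F A)
    (hS : IsCompl (Subalgebra.toSubmodule S) (Submodule.restrictScalars F J))
    (lam : (Submodule.restrictScalars F J) →ₗ[F] F)
    (hlam : IsSingularStar J hJr lam) :
    ∃! e : A, IsIdempotentElem e ∧ e ∈ S ∧
      (∃ mu : (Submodule.restrictScalars F J) →ₗ[F] F,
        SameOrbitJStar J hJr S lam mu ∧ MemJeStar J hJr e mu) ∧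
      (∀ mu : (Submodule.restrictScalars F J) →ₗ[F] F,
        SameOrbitJStar J hJr S lam mu → MemJeStar J hJr e mu →
        IsRegularStarInJe J hJr e mu) := by
  have : Finite A := Module.finite_of_finite F
  have hdis : ∀ x, x ∈ S → x ∈ J → x = 0 := fun x h1 h2 =>
    Submodule.disjoint_def.mp hS.disjoint x ((Subalgebra.mem_toSubmodule S).mpr h1) h2
  have hcomm : ∀ a ∈ S, ∀ b ∈ S, a * b = b * a := by
    intro a haS b hbS
    have h1 : a * b - b * a ∈ S := S.sub_mem (S.mul_mem haS hbS) (S.mul_mem hbS haS)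
    exact sub_eq_zero.mp (hdis _ h1 (hred a b))
  -- the set of "support" idempotents in S of elements of the orbit of lam
  set E : Set A := {s : A | s ∈ S ∧ IsIdempotentElem s ∧
    ∃ mu, SameOrbitJStar J hJr S lam mu ∧ MemJeStar J hJr s mu} with hEdef
  have hE1 : (1 : A) ∈ E := by
    refine ⟨S.one_mem, IsIdempotentElem.one, lam, orbit_refl J hJr S lam, fun x hx => ?_⟩
    exact lam_congr J lam _ _ (by simp)
  -- choose an element of E with minimal corner
  set m : A → ℕ := fun s => Set.ncard {x : A | s * x * s = x} with hmdef
  obtain ⟨e, heE, hemin⟩ := Set.exists_min_image E m (Set.toFinite E) ⟨1, hE1⟩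
  obtain ⟨heS, hei, mue, hmue1, hmue2⟩ := heE
  -- minimality: e * s = e for all s in E
  have hminmul : ∀ s ∈ E, e * s = e := by
    intro s hsE
    obtain ⟨hsS, hsi, mus, hmus1, hmus2⟩ := hsE
    obtain ⟨nu, hnu1, hnu2⟩ := closure_mul J hJr S hJ hcomm heS hsS hei hsi
      hmue1 hmus1 hmue2 hmus2
    have hces : s * e = e * s := hcomm _ hsS _ heS
    have hesi : IsIdempotentElem (e * s) :=
      IsIdempotentElem.mul_of_commute hces.symm hei hsi
    have hesE : e * s ∈ E := ⟨S.mul_mem heS hsS, hesi, nu, hnu1, hnu2⟩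
    by_contra hne
    have he_es : e * (e * s) = e * s := by rw [← mul_assoc, hei.eq]
    have hes_e : (e * s) * e = e * s := by
      rw [mul_assoc, hces, ← mul_assoc, hei.eq]
    have hsub : {x : A | (e * s) * x * (e * s) = x} ⊆ {x : A | e * x * e = x} := by
      intro x hx
      simp only [Set.mem_setOf_eq] at hx ⊢
      conv_lhs => rw [← hx]
      calc e * ((e * s) * x * (e * s)) * e
          = (e * (e * s)) * x * ((e * s) * e) := by simp only [mul_assoc]
      _ = (e * s) * x * (e * s) := by rw [he_es, hes_e]
      _ = x := hx
    have hmem_e : e ∈ {x : A | e * x * e = x} := by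
      simp only [Set.mem_setOf_eq, hei.eq]
    have hnotmem : e ∉ {x : A | (e * s) * x * (e * s) = x} := by
      simp only [Set.mem_setOf_eq]
      intro habs
      apply hne
      rw [hes_e, hesi.eq] at habs
      exact habs
    have hstrict : {x : A | (e * s) * x * (e * s) = x} ⊂ {x : A | e * x * e = x} :=
      (Set.ssubset_iff_of_subset hsub).mpr ⟨e, hmem_e, hnotmem⟩
    have hlt : m (e * s) < m e := Set.ncard_lt_ncard hstrict (Set.toFinite _)
    have := hemin _ hesE
    omega
  -- regularity of every member of the intersection
  have hreg : ∀ mu, SameOrbitJStar J hJr S lam mu → MemJeStar J hJr e mu →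
      IsRegularStarInJe J hJr e mu := by
    intro mu hSO hMem
    rintro ⟨f, hfi, hfc, hfne, hfinv⟩
    obtain ⟨s, hsS, hsi, hfsJ, nu, hnu1, hnu2⟩ := memJe_to_S J hJr S hJ hS hfi hSO hfinv
    have hsE : s ∈ E := ⟨hsS, hsi, nu, hnu1, hnu2⟩
    have hes : e * s = e := hminmul s hsE
    have hese : e * s * e = e := by rw [hes, hei.eq]
    have h2 : f - e * s * e ∈ J := by
      have hid : e * (f - s) * e = f - e * s * e := by rw [mul_sub, sub_mul, hfc]
      rw [← hid]
      exact hJr _ (J.mul_mem_left e hfsJ) e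
    have h3 : s - f ∈ J := by simpa using J.neg_mem hfsJ
    have h1 : s - e * s * e ∈ J := by
      have := J.add_mem h3 h2
      rwa [sub_add_sub_cancel] at this
    have h4 : s - e * s * e ∈ S :=
      S.sub_mem hsS (S.mul_mem (S.mul_mem heS hsS) heS)
    have h5 : s = e * s * e := sub_eq_zero.mp (hdis _ h4 h1)
    have hse : s = e := by rw [h5, hese]
    rw [hse] at hfsJ
    have hef : e * f = f := by
      conv_lhs => rw [← hfc]
      rw [← mul_assoc, ← mul_assoc, hei.eq, hfc]
    have hfe : f * e = f := by
      conv_lhs => rw [← hfc]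
      rw [mul_assoc, hei.eq, hfc]
    have hgi : IsIdempotentElem (e - f) := by
      show (e - f) * (e - f) = e - f
      rw [sub_mul, mul_sub, mul_sub, hei.eq, hef, hfe, hfi.eq]
      abel
    have hgJ : e - f ∈ J := by
      have := J.neg_mem hfsJ
      rwa [neg_sub] at this
    have := idem_in_J_eq_zero J hJ hgi hgJ
    exact hfne (sub_eq_zero.mp this).symm
  refine ⟨e, ⟨hei, heS, ⟨mue, hmue1, hmue2⟩, hreg⟩, ?_⟩
  -- uniqueness
  rintro e' ⟨he'i, he'S, ⟨mu', hmu'1, hmu'2⟩, hreg'⟩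
  have he'E : e' ∈ E := ⟨he'S, he'i, mu', hmu'1, hmu'2⟩
  have hee' : e * e' = e := hminmul e' he'E
  have hc : e' * e = e := (hcomm e' he'S e heS).trans hee'
  have hMem' : MemJeStar J hJr e' mue := by
    intro x hx
    have hy : e' * x * e' ∈ J := hJr _ (J.mul_mem_left e' hx) e'
    have step := hmue2 _ hy
    have heq : e * (e' * x * e') * e = e * x * e := by
      calc e * (e' * x * e') * e = (e * e') * x * (e' * e) := by simp only [mul_assoc]
      _ = e * x * e := by rw [hee', hc]
    calc mue ⟨x, hx⟩ = mue ⟨e * x * e, _⟩ := hmue2 x hx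
    _ = mue ⟨e * (e' * x * e') * e, _⟩ := lam_congr J mue _ _ heq.symm
    _ = mue ⟨e' * x * e', hy⟩ := step.symm
  by_contra hne
  exact hreg' mue hmue1 hMem'
    ⟨e, hei, by rw [hc, hee'], fun h => hne h.symm, hmue2⟩
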